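/- KKT sufficiency and uniqueness: let d ≥ 2 and let p* ∈ ℝ^d be a probability vector with p*_1 > 0. Set I_i := ∫₀¹ i·t^{i−1}·(−log(1−t))/p*'(t)² dt and v := ∫₀¹ (−log(1−t))/p*'(t) dt. If I_i = v for every i with p*_i > 0 and I_i ≤ v for every i ∈ {1,…,d}, then for every probability vector q ∈ ℝ^d with q ≠ p*, the extended-valued integral ∫⁻_{t∈(0,1)} (−log(1−t))/q'(t) dt is strictly greater than ENNReal.ofReal(v); i.e., p* is the unique minimizer of f over the probability simplex. -/
import Mathlib


open MeasureTheory Real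

/-- `p'(t) = ∑_{i=1}^d i·p_i·t^{i-1}`, where the probability vector `p : Fin d → ℝ`
has `p i` corresponding to degree `i + 1`. -/
noncomputable def pderiv {d : ℕ} (p : Fin d → ℝ) (t : ℝ) : ℝ :=
  ∑ i : Fin d, ((i : ℕ) + 1 : ℝ) * p i * t ^ (i : ℕ)

section Helpers

open Set

lemma W_pos {t : ℝ} (ht : t ∈ Ioo (0:ℝ) 1) : 0 < -Real.log (1 - t) := by
  have : Real.log (1 - t) < 0 := Real.log_neg (by linarith [ht.1, ht.2]) (by linarith [ht.1])
  linarith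

lemma W_contOn : ContinuousOn (fun t : ℝ => -Real.log (1 - t)) (Ioo (0:ℝ) 1) := by
  apply ContinuousOn.neg
  apply ContinuousOn.log (by fun_prop)
  intro t ht; simp only [mem_Ioo] at ht; nlinarith [ht.1, ht.2]

lemma W_le {t : ℝ} (ht : t ∈ Ioo (0:ℝ) 1) :
    -Real.log (1 - t) ≤ 2 * (1 - t) ^ (-(1/2) : ℝ) := by
  obtain ⟨h0, h1⟩ := ht
  set x := 1 - t with hx
  have hx0 : 0 < x := by simp [hx]; linarith
  have h2 : Real.log x = 2 * Real.log (x ^ ((1:ℝ)/2)) := by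
    rw [Real.log_rpow hx0]; ring
  have h3 : Real.log ((x ^ ((1:ℝ)/2))⁻¹) ≤ (x ^ ((1:ℝ)/2))⁻¹ - 1 :=
    Real.log_le_sub_one_of_pos (by positivity)
  rw [Real.log_inv] at h3
  have h4 : (x ^ ((1:ℝ)/2))⁻¹ = x ^ (-(1/2) : ℝ) := by
    rw [Real.rpow_neg hx0.le]
  have h6 : -Real.log x ≤ 2 * (x ^ (-(1/2):ℝ) - 1) := by
    rw [h2]; rw [h4] at h3; linarith
  have h5 : (0:ℝ) ≤ x ^ (-(1/2):ℝ) := by positivity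
  linarith

lemma W_integrable : IntegrableOn (fun t : ℝ => -Real.log (1 - t)) (Ioo (0:ℝ) 1) volume := by
  have h1 : IntervalIntegrable (fun x : ℝ => x ^ (-(1/2):ℝ)) volume 0 1 :=
    intervalIntegral.intervalIntegrable_rpow' (by norm_num)
  have h2 : IntervalIntegrable (fun x : ℝ => (1 - x) ^ (-(1/2):ℝ)) volume (1-0) (1-1) :=
    h1.comp_sub_left 1
  have h3 : IntegrableOn (fun x : ℝ => (1 - x) ^ (-(1/2):ℝ)) (Ioo (0:ℝ) 1) volume := by
    have := (h2.symm).1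
    simp only [sub_zero, sub_self] at this ⊢
    exact (this.mono_set Ioo_subset_Ioc_self)
  apply Integrable.mono' (h3.const_mul 2)
  · exact (W_contOn.aestronglyMeasurable measurableSet_Ioo)
  · rw [ae_restrict_iff' measurableSet_Ioo]
    filter_upwards with t ht
    rw [Real.norm_eq_abs, abs_of_pos (W_pos ht)]
    exact W_le ht

lemma integrableOn_W_mul {c : ℝ → ℝ} (hc : ContinuousOn c (Ioo (0:ℝ) 1)) {C : ℝ}
    (hC : ∀ t ∈ Ioo (0:ℝ) 1, |c t| ≤ C) :
    IntegrableOn (fun t : ℝ => (-Real.log (1 - t)) * c t) (Ioo (0:ℝ) 1) volume := by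
  apply Integrable.mono' (W_integrable.const_mul C)
  · exact ((W_contOn.mul hc).aestronglyMeasurable measurableSet_Ioo)
  · rw [ae_restrict_iff' measurableSet_Ioo]
    filter_upwards with t ht
    have hW := W_pos ht
    rw [Real.norm_eq_abs, abs_mul, abs_of_pos hW]
    calc (-Real.log (1 - t)) * |c t| ≤ (-Real.log (1 - t)) * C :=
          mul_le_mul_of_nonneg_left (hC t ht) hW.le
      _ = C * (-Real.log (1 - t)) := mul_comm _ _

lemma pderiv_continuous {d : ℕ} (p : Fin d → ℝ) : Continuous (pderiv p) := by
  unfold pderiv; fun_prop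

lemma pderiv_ge {d : ℕ} (hd : 0 < d) (p : Fin d → ℝ) (hp : ∀ i, 0 ≤ p i)
    {t : ℝ} (ht : t ∈ Ioo (0:ℝ) 1) : p ⟨0, hd⟩ ≤ pderiv p t := by
  have h0 : ((((⟨0, hd⟩ : Fin d) : ℕ) : ℝ) + 1) * p ⟨0, hd⟩ * t ^ ((⟨0, hd⟩ : Fin d) : ℕ)
      = p ⟨0, hd⟩ := by norm_num
  calc p ⟨0, hd⟩ = _ := h0.symm
    _ ≤ pderiv p t := by
      apply Finset.single_le_sum (f := fun i : Fin d => (((i:ℕ):ℝ)+1) * p i * t ^ (i:ℕ))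
      · intro i _
        have := hp i
        have := ht.1
        positivity
      · exact Finset.mem_univ _

lemma pderiv_pos {d : ℕ} (p : Fin d → ℝ) (hp : ∀ i, 0 ≤ p i) (hp1 : ∑ i, p i = 1)
    {t : ℝ} (ht : t ∈ Ioo (0:ℝ) 1) : 0 < pderiv p t := by
  have : ∃ j, 0 < p j := by
    by_contra h
    push_neg at h
    have : ∑ i, p i = 0 := Finset.sum_eq_zero fun i _ => le_antisymm (h i) (hp i)
    rw [hp1] at this; norm_num at this
  obtain ⟨j, hj⟩ := this
  have hterm : 0 < (((j:ℕ):ℝ)+1) * p j * t ^ (j:ℕ) := by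
    have := ht.1; positivity
  calc (0:ℝ) < _ := hterm
    _ ≤ pderiv p t := by
      apply Finset.single_le_sum (f := fun i : Fin d => (((i:ℕ):ℝ)+1) * p i * t ^ (i:ℕ))
      · intro i _; have := hp i; have := ht.1; positivity
      · exact Finset.mem_univ _

lemma pderiv_le {d : ℕ} (p : Fin d → ℝ) (hp : ∀ i, 0 ≤ p i) (hp1 : ∑ i, p i = 1)
    {t : ℝ} (ht : t ∈ Ioo (0:ℝ) 1) : pderiv p t ≤ d := by
  have h : pderiv p t ≤ ∑ i : Fin d, (d : ℝ) * p i := by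
    apply Finset.sum_le_sum
    intro i _
    have h1 : (((i:ℕ):ℝ)+1) ≤ (d:ℝ) := by exact_mod_cast Nat.succ_le_of_lt i.2
    have h2 : t ^ (i:ℕ) ≤ 1 := pow_le_one₀ ht.1.le ht.2.le
    have h3 : (0:ℝ) ≤ t ^ (i:ℕ) := pow_nonneg ht.1.le _
    have h4 := hp i
    have h5 : (((i:ℕ):ℝ)+1) * p i * t ^ (i:ℕ) ≤ (((i:ℕ):ℝ)+1) * p i * 1 :=
      mul_le_mul_of_nonneg_left h2 (by positivity)
    have h6 : (((i:ℕ):ℝ)+1) * p i ≤ (d:ℝ) * p i := mul_le_mul_of_nonneg_right h1 h4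
    nlinarith
  calc pderiv p t ≤ ∑ i : Fin d, (d : ℝ) * p i := h
    _ = d := by rw [← Finset.mul_sum, hp1, mul_one]

lemma pderiv_sub_eval {d : ℕ} (q p : Fin d → ℝ) (t : ℝ) :
    (∑ i : Fin d, Polynomial.monomial (i:ℕ) ((((i:ℕ):ℝ)+1) * (q i - p i))).eval t
      = pderiv q t - pderiv p t := by
  rw [Polynomial.eval_finset_sum]
  simp only [Polynomial.eval_monomial, pderiv]
  rw [← Finset.sum_sub_distrib]
  congr 1; ext i; ring

lemma poly_ne_zero {d : ℕ} (q p : Fin d → ℝ) (h : q ≠ p) :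
    (∑ i : Fin d, Polynomial.monomial (i:ℕ) ((((i:ℕ):ℝ)+1) * (q i - p i))) ≠ 0 := by
  obtain ⟨j, hj⟩ := Function.ne_iff.1 h
  intro hP
  have hcoeff := congrArg (fun P => Polynomial.coeff P (j:ℕ)) hP
  simp only [Polynomial.finset_sum_coeff, Polynomial.coeff_monomial, Polynomial.coeff_zero] at hcoeff
  rw [Finset.sum_eq_single j] at hcoeff
  · simp only [if_pos rfl] at hcoeff
    have hpos : (0:ℝ) < ((j:ℕ):ℝ)+1 := by positivity
    rcases mul_eq_zero.1 hcoeff with h1 | h2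
    · linarith
    · exact hj (by linarith)
  · intro b _ hb
    have : (b:ℕ) ≠ (j:ℕ) := fun hbj => hb (Fin.ext hbj)
    simp [this]
  · intro hj'; exact absurd (Finset.mem_univ j) hj'

end Helpers

theorem stmt_8 (d : ℕ) (hd : 2 ≤ d) (ps : Fin d → ℝ)
    (hps0 : ∀ i, 0 ≤ ps i) (hps1 : ∑ i, ps i = 1)
    (hps : 0 < ps ⟨0, by omega⟩)
    (I : Fin d → ℝ)
    (hI : ∀ i : Fin d, I i =
      ∫ t in Set.Ioo (0 : ℝ) 1,
        ((i : ℕ) + 1 : ℝ) * t ^ (i : ℕ) * (-Real.log (1 - t)) / (pderiv ps t) ^ 2)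
    (v : ℝ)
    (hv : v = ∫ t in Set.Ioo (0 : ℝ) 1, (-Real.log (1 - t)) / pderiv ps t)
    (hEq : ∀ i : Fin d, 0 < ps i → I i = v)
    (hLe : ∀ i : Fin d, I i ≤ v) :
    ∀ q : Fin d → ℝ, (∀ i, 0 ≤ q i) → ∑ i, q i = 1 → q ≠ ps →
      ENNReal.ofReal v <
        ∫⁻ t in Set.Ioo (0 : ℝ) 1,
          ENNReal.ofReal ((-Real.log (1 - t)) / pderiv q t) := by
  intro q hq0 hq1 hqne
  classical
  have hd0 : 0 < d := by omega
  set S := Set.Ioo (0:ℝ) 1 with hS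
  have haS : ∀ t ∈ S, 0 < pderiv ps t := fun t ht =>
    lt_of_lt_of_le hps (pderiv_ge hd0 ps hps0 ht)
  have hxS : ∀ t ∈ S, 0 < pderiv q t := fun t ht => pderiv_pos q hq0 hq1 ht
  have hp0 : 0 < ps ⟨0, hd0⟩ := hps
  -- integrability of the base function
  have hf1 : IntegrableOn (fun t => (-Real.log (1 - t)) / pderiv ps t) S volume := by
    have heq : (fun t : ℝ => (-Real.log (1 - t)) / pderiv ps t)
        = fun t => (-Real.log (1 - t)) * (pderiv ps t)⁻¹ := funext fun t => div_eq_mul_inv _ _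
    rw [heq]
    apply integrableOn_W_mul (C := (ps ⟨0, hd0⟩)⁻¹)
    · exact ContinuousOn.inv₀ (pderiv_continuous ps).continuousOn
        (fun t ht => (haS t ht).ne')
    · intro t ht
      rw [abs_of_pos (inv_pos.2 (haS t ht))]
      exact inv_anti₀ hp0 (pderiv_ge hd0 ps hps0 ht)
  -- integrability of each KKT integrand
  have hF : ∀ i : Fin d, IntegrableOn
      (fun t => (((i:ℕ):ℝ) + 1) * t ^ (i:ℕ) * (-Real.log (1 - t)) / (pderiv ps t) ^ 2)
      S volume := by
    intro i
    have heq : (fun t : ℝ => (((i:ℕ):ℝ) + 1) * t ^ (i:ℕ) * (-Real.log (1 - t)) / (pderiv ps t) ^ 2)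
        = fun t => (-Real.log (1 - t)) * ((((i:ℕ):ℝ) + 1) * t ^ (i:ℕ) / (pderiv ps t) ^ 2) :=
      funext fun t => by ring
    rw [heq]
    refine integrableOn_W_mul (C := (d : ℝ) / (ps ⟨0, hd0⟩) ^ 2) ?_ ?_
    · exact ContinuousOn.div (Continuous.continuousOn (by fun_prop))
        ((pderiv_continuous ps).pow 2).continuousOn
        (fun t ht => pow_ne_zero 2 (haS t ht).ne')
    · intro t ht
      have ha := haS t ht
      have hage := pderiv_ge hd0 ps hps0 ht
      have h1 : (((i:ℕ):ℝ)+1) ≤ (d:ℝ) := by exact_mod_cast Nat.succ_le_of_lt i.2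
      have h2 : t ^ (i:ℕ) ≤ 1 := pow_le_one₀ ht.1.le ht.2.le
      have h3 : (0:ℝ) ≤ t ^ (i:ℕ) := pow_nonneg ht.1.le _
      have hnum : (((i:ℕ):ℝ) + 1) * t ^ (i:ℕ) ≤ (d : ℝ) := by nlinarith
      have hden : (ps ⟨0, hd0⟩) ^ 2 ≤ (pderiv ps t) ^ 2 := by nlinarith
      rw [abs_of_nonneg (by positivity)]
      exact div_le_div₀ (by positivity) hnum (by positivity) hden
  -- the affine minorant h
  set h : ℝ → ℝ := fun t => (-Real.log (1 - t)) / pderiv ps t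
      + ∑ i : Fin d, (ps i - q i) *
        ((((i:ℕ):ℝ) + 1) * t ^ (i:ℕ) * (-Real.log (1 - t)) / (pderiv ps t) ^ 2) with hh_def
  have hh_int : IntegrableOn h S volume := by
    apply hf1.add
    exact integrable_finset_sum _ fun i _ => ((hF i).const_mul _)
  have hh_integral : ∫ t in S, h t = v + ∑ i : Fin d, (ps i - q i) * I i := by
    rw [hh_def]
    rw [integral_add hf1 (integrable_finset_sum _ fun i _ => ((hF i).const_mul _))]
    rw [integral_finset_sum _ fun i _ => ((hF i).const_mul _)]
    congr 1
    · exact hv.symm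
    · refine Finset.sum_congr rfl fun i _ => ?_
      rw [integral_const_mul, ← hI i]
  -- the slack term is nonnegative on I
  have key1 : ∑ i : Fin d, ps i * I i = v := by
    have : ∀ i : Fin d, ps i * I i = ps i * v := by
      intro i
      rcases eq_or_lt_of_le (hps0 i) with h0 | h0
      · rw [← h0]; ring
      · rw [hEq i h0]
    rw [Finset.sum_congr rfl fun i _ => this i, ← Finset.sum_mul, hps1, one_mul]
  have key2 : ∑ i : Fin d, q i * I i ≤ v := by
    calc ∑ i : Fin d, q i * I i ≤ ∑ i : Fin d, q i * v :=
          Finset.sum_le_sum fun i _ => mul_le_mul_of_nonneg_left (hLe i) (hq0 i)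
      _ = v := by rw [← Finset.sum_mul, hq1, one_mul]
  have hh_ge : v ≤ ∫ t in S, h t := by
    have : ∑ i : Fin d, (ps i - q i) * I i
        = ∑ i : Fin d, ps i * I i - ∑ i : Fin d, q i * I i := by
      rw [← Finset.sum_sub_distrib]; congr 1; ext i; ring
    rw [hh_integral, this, key1]
    linarith
  have hv_nonneg : 0 ≤ v := by
    rw [hv]
    apply setIntegral_nonneg measurableSet_Ioo
    intro t ht
    exact div_nonneg (W_pos ht).le (haS t ht).le
  -- case split on finiteness of the lintegral
  by_cases hL : (∫⁻ t in S, ENNReal.ofReal ((-Real.log (1 - t)) / pderiv q t)) = ⊤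
  · rw [hL]; exact ENNReal.ofReal_lt_top
  · -- the objective at q is a finite integral
    have hg_nn : 0 ≤ᵐ[volume.restrict S] fun t => (-Real.log (1 - t)) / pderiv q t :=
      (ae_restrict_iff' measurableSet_Ioo).2
        (.of_forall fun t ht => div_nonneg (W_pos ht).le (hxS t ht).le)
    have hg_meas : AEStronglyMeasurable (fun t => (-Real.log (1 - t)) / pderiv q t)
        (volume.restrict S) :=
      ((W_contOn.div (pderiv_continuous q).continuousOn
        (fun t ht => (hxS t ht).ne')).aestronglyMeasurable measurableSet_Ioo)
    have hg_int : IntegrableOn (fun t => (-Real.log (1 - t)) / pderiv q t) S volume :=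
      ⟨hg_meas, (hasFiniteIntegral_iff_ofReal hg_nn).2 (lt_top_iff_ne_top.2 hL)⟩
    have hL_eq : (∫⁻ t in S, ENNReal.ofReal ((-Real.log (1 - t)) / pderiv q t))
        = ENNReal.ofReal (∫ t in S, (-Real.log (1 - t)) / pderiv q t) :=
      (ofReal_integral_eq_lintegral_ofReal hg_int hg_nn).symm
    -- the strict-convexity slack
    set δ : ℝ → ℝ := fun t => (-Real.log (1 - t)) * (pderiv q t - pderiv ps t) ^ 2
        / ((pderiv ps t) ^ 2 * pderiv q t) with hδ_def
    have hsum : ∀ t : ℝ, (∑ i : Fin d, (ps i - q i) *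
        ((((i:ℕ):ℝ) + 1) * t ^ (i:ℕ) * (-Real.log (1 - t)) / (pderiv ps t) ^ 2))
        = (pderiv ps t - pderiv q t) * (-Real.log (1 - t)) / (pderiv ps t) ^ 2 := by
      intro t
      rw [pderiv, pderiv, ← Finset.sum_sub_distrib, Finset.sum_mul, Finset.sum_div]
      refine Finset.sum_congr rfl fun i _ => ?_
      ring
    have hpt : ∀ t ∈ S, (-Real.log (1 - t)) / pderiv q t = h t + δ t := by
      intro t ht
      have ha := haS t ht
      have hx := hxS t ht
      rw [hh_def, hδ_def]
      simp only [hsum]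
      field_simp
      ring
    have hδ_int : IntegrableOn δ S volume := by
      refine IntegrableOn.congr_fun (hg_int.sub hh_int) (fun t ht => ?_) measurableSet_Ioo
      have := hpt t ht
      simp only [Pi.sub_apply]
      linarith
    have hδ_nn : 0 ≤ᵐ[volume.restrict S] δ := by
      refine (ae_restrict_iff' measurableSet_Ioo).2 (.of_forall fun t ht => ?_)
      have hW := (W_pos ht).le
      have ha := haS t ht
      have hx := hxS t ht
      rw [hδ_def]
      positivity
    have hδ_pos : 0 < ∫ t in S, δ t := by
      rw [setIntegral_pos_iff_support_of_nonneg_ae hδ_nn hδ_int]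
      set P := ∑ i : Fin d, Polynomial.monomial (i:ℕ) ((((i:ℕ):ℝ)+1) * (q i - ps i)) with hP_def
      have hPne : P ≠ 0 := poly_ne_zero q ps hqne
      have hZfin : {t : ℝ | P.IsRoot t}.Finite := Polynomial.finite_setOf_isRoot hPne
      have hsub : S \ {t : ℝ | P.IsRoot t} ⊆ Function.support δ ∩ S := by
        rintro t ⟨ht, htZ⟩
        refine ⟨?_, ht⟩
        have hne : pderiv q t - pderiv ps t ≠ 0 := by
          intro hc
          exact htZ (by simpa [Polynomial.IsRoot, hP_def, pderiv_sub_eval q ps t] using hc)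
        have hW := W_pos ht
        have ha := haS t ht
        have hx := hxS t ht
        have : 0 < δ t := by
          rw [hδ_def]
          positivity
        exact this.ne'
      have hmeas : volume (S \ {t : ℝ | P.IsRoot t}) = volume S :=
        measure_diff_null (hZfin.measure_zero _)
      have hSpos : (0:ENNReal) < volume S := by
        rw [hS, Real.volume_Ioo]
        norm_num
      calc (0:ENNReal) < volume S := hSpos
        _ = volume (S \ {t : ℝ | P.IsRoot t}) := hmeas.symm
        _ ≤ volume (Function.support δ ∩ S) := measure_mono hsub
    have hg_integral : ∫ t in S, (-Real.log (1 - t)) / pderiv q t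
        = (∫ t in S, h t) + ∫ t in S, δ t := by
      rw [setIntegral_congr_fun measurableSet_Ioo hpt, integral_add hh_int hδ_int]
    have hgv : v < ∫ t in S, (-Real.log (1 - t)) / pderiv q t := by
      rw [hg_integral]; linarith
    rw [hL_eq]
    exact (ENNReal.ofReal_lt_ofReal_iff (by linarith)).2 hgv
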